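/- arXiv:2002.05027 — 3 statements merged into one kernel-verified Lean document; each statement's English description precedes it below -/
import Mathlib

section
/- For every k ≥ 1 and every d = (d1, …, dk) ∈ ℤ^k, the monomial shuffle element Sh_k(d) is a Laurent polynomial (i.e., despite each factor ω having denominator z_i − z_j, the full symmetrized sum lies in the subring R[z1^{±1}, …, zk^{±1}] of F_k), and it is symmetric: for every permutation τ of {1, …, k}, Sh_k(d) is invariant under the ℂ(q1,q2)-algebra automorphism of F_k permuting the variables z_i ↦ z_{τ(i)}. -/
open MvPolynomial Finset

noncomputable section

/-- `Fk k` is the field `F_k = ℂ(q1, q2, z1, …, zk)`, realized as the fraction field of the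
polynomial ring `ℂ[q1, q2, z1, …, zk]`. -/
abbrev Fk (k : ℕ) : Type := FractionRing (MvPolynomial (Fin 2 ⊕ Fin k) ℂ)

/-- The indeterminate `q1` in `F_k`. -/
def q1F (k : ℕ) : Fk k := algebraMap (MvPolynomial (Fin 2 ⊕ Fin k) ℂ) (Fk k) (X (Sum.inl 0))

/-- The indeterminate `q2` in `F_k`. -/
def q2F (k : ℕ) : Fk k := algebraMap (MvPolynomial (Fin 2 ⊕ Fin k) ℂ) (Fk k) (X (Sum.inl 1))

/-- The indeterminates `z1, …, zk` in `F_k` (zero-indexed: `zF k i` is `z_{i+1}`). -/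
def zF (k : ℕ) (i : Fin k) : Fk k := algebraMap (MvPolynomial (Fin 2 ⊕ Fin k) ℂ) (Fk k) (X (Sum.inr i))

/-- `ω(x, y) = (x − q·y)(y − q1·x)(y − q2·x)/(x − y)`, where `q = q1·q2`. -/
def omegaF {K : Type*} [Field K] (q1 q2 x y : K) : K :=
  (x - q1 * q2 * y) * (y - q1 * x) * (y - q2 * x) / (x - y)

/-- The monomial shuffle element
`Sh_k(d) = Σ_{σ ∈ S_k} ∏_{i=1}^k z_{σ(i)}^{d_i} · ∏_{1 ≤ i < j ≤ k} ω(z_{σ(i)}, z_{σ(j)})`,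
as a rational expression in the values `z : Fin k → K`. -/
def Sh {K : Type*} [Field K] (q1 q2 : K) {k : ℕ} (z : Fin k → K) (d : Fin k → ℤ) : K :=
  ∑ σ : Equiv.Perm (Fin k), (∏ i, z (σ i) ^ d i) *
    ∏ p ∈ Finset.univ.filter (fun p : Fin k × Fin k => p.1 < p.2),
      omegaF q1 q2 (z (σ p.1)) (z (σ p.2))

/-- The Laurent polynomial subring `R[z1^{±1}, …, zk^{±1}]` of `K`, where
`R = ℂ[q1^{±1}, q2^{±1}]`: the subring generated by the complex constants,
`q1^{±1}`, `q2^{±1}` and the `z_i^{±1}`. -/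
def laurentSubring {K : Type*} [Field K] [Algebra ℂ K] (q1 q2 : K) {k : ℕ} (z : Fin k → K) :
    Subring K :=
  Subring.closure ((Set.range fun c : ℂ => algebraMap ℂ K c) ∪ {q1, q1⁻¹, q2, q2⁻¹} ∪
    Set.range z ∪ Set.range fun i => (z i)⁻¹)

/-- The `ℂ(q1,q2)`-algebra automorphism of `F_k` fixing `q1, q2` and sending `z_i ↦ z_{τ(i)}`. -/
def permAut (k : ℕ) (τ : Equiv.Perm (Fin k)) : Fk k ≃+* Fk k :=
  IsFractionRing.ringEquivOfRingEquiv
    (MvPolynomial.renameEquiv ℂ (Equiv.sumCongr (Equiv.refl (Fin 2)) τ)).toRingEquiv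


/-!
Multiplying `Sh_k(d)` by `(z_1 ⋯ z_k)^m` for large `m` and by `Δ = ∏_{i<j} (z_i - z_j)` clears
all denominators: since `∏_{i<j} (z_{σ i} - z_{σ j}) = sign σ · Δ`, the `σ`-th summand becomes
`sign σ` times a polynomial. The resulting polynomial `N` is alternating in the `z_i`, so each
prime `z_i - z_j` divides it (the substitution `z_i ↦ z_j` kills `N`). These primes are pairwise
non-associated in the factorial ring `ℂ[q1, q2, z]`, hence `Δ ∣ N` and
`Sh_k(d) = (N / Δ) · (z_1 ⋯ z_k)^(-m)`. Symmetry is a reindexing of the sum over `S_k`.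
-/

def ltPairs (ι : Type*) [Fintype ι] [LinearOrder ι] : Finset (ι × ι) :=
  univ.filter fun p => p.1 < p.2

theorem mem_ltPairs {ι : Type*} [Fintype ι] [LinearOrder ι] {p : ι × ι} :
    p ∈ ltPairs ι ↔ p.1 < p.2 := by
  simp [ltPairs]

namespace MvPolynomial

variable {σ R : Type*} [DecidableEq σ] [CommRing R]

theorem X_sub_X_dvd_sub_rename_update (a b : σ) (P : MvPolynomial σ R) :
    X a - X b ∣ P - rename (Function.update id a b) P := by
  induction P using MvPolynomial.induction_on with
  | C c => simp
  | add p q hp hq => simpa only [map_add, add_sub_add_comm] using dvd_add hp hq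
  | mul_X p v hp =>
    rw [map_mul, rename_X]
    by_cases hv : v = a
    · subst hv
      rw [Function.update_self]
      have : p * X v - rename (Function.update id v b) p * X b =
          (p - rename (Function.update id v b) p) * X v
            + rename (Function.update id v b) p * (X v - X b) := by ring
      rw [this]
      exact dvd_add (dvd_mul_of_dvd_left hp _) (dvd_mul_left _ _)
    · rw [Function.update_of_ne hv, id, ← sub_mul]
      exact dvd_mul_of_dvd_left hp _

theorem ker_rename_update {a b : σ} (hab : a ≠ b) :
    RingHom.ker (rename (Function.update id a b) : MvPolynomial σ R →ₐ[R] MvPolynomial σ R) =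
      Ideal.span {X a - X b} := by
  apply le_antisymm
  · intro P hP
    rw [Ideal.mem_span_singleton]
    simpa [show rename (Function.update id a b) P = 0 from hP] using
      X_sub_X_dvd_sub_rename_update (R := R) a b P
  · rw [Ideal.span_le, Set.singleton_subset_iff, SetLike.mem_coe, RingHom.mem_ker]
    simp [Function.update_of_ne hab.symm]

theorem prime_X_sub_X [IsDomain R] {a b : σ} (hab : a ≠ b) :
    Prime (X a - X b : MvPolynomial σ R) := by
  have hne : (X a - X b : MvPolynomial σ R) ≠ 0 :=
    sub_ne_zero.mpr fun h => hab (X_injective h)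
  rw [← Ideal.span_singleton_prime hne, ← ker_rename_update hab]
  exact RingHom.ker_isPrime _

theorem eq_or_eq_of_X_sub_X_dvd [Nontrivial R] {a b c d : σ} (hab : a ≠ b) (hcd : c ≠ d)
    (h : (X a - X b : MvPolynomial σ R) ∣ X c - X d) : c = a ∧ d = b ∨ c = b ∧ d = a := by
  obtain ⟨Q, hQ⟩ := h
  have h0 : rename (Function.update id a b) (X c - X d : MvPolynomial σ R) = 0 := by
    rw [hQ, map_mul]
    simp [Function.update_of_ne hab.symm]
  rw [map_sub, rename_X, rename_X, sub_eq_zero] at h0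
  have hupd := X_injective h0
  by_cases hca : c = a <;> by_cases hda : d = a <;> simp_all

theorem X_sub_X_dvd_of_rename_swap_eq_neg [IsDomain R] [NeZero (2 : R)] {a b : σ}
    {P : MvPolynomial σ R} (h : rename (Equiv.swap a b) P = -P) : X a - X b ∣ P := by
  have hcomp : Function.update id a b ∘ Equiv.swap a b = Function.update id a b := by
    ext v
    simp only [Function.comp_apply, Equiv.swap_apply_def, Function.update_apply, id]
    split_ifs <;> simp_all
  have h2 : (2 : MvPolynomial σ R) * rename (Function.update id a b) P = 0 := by
    have := congrArg (rename (R := R) (Function.update id a b)) h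
    rw [rename_rename, hcomp, map_neg] at this
    linear_combination this
  have h2ne : (2 : MvPolynomial σ R) ≠ 0 := by
    simpa [← map_ofNat C 2] using (C_injective σ R).ne (NeZero.ne (2 : R))
  have hP : rename (Function.update id a b) P = 0 := (mul_eq_zero.mp h2).resolve_left h2ne
  simpa [hP] using X_sub_X_dvd_sub_rename_update (R := R) a b P

theorem prod_ltPairs_X_sub_X_dvd {K ι : Type*} [Field K] [NeZero (2 : K)] [Fintype ι]
    [LinearOrder ι] {v : ι → σ} (hv : Function.Injective v) {P : MvPolynomial σ K}
    (h : ∀ i j, i < j → rename (Equiv.swap (v i) (v j)) P = -P) :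
    ∏ p ∈ ltPairs ι, (X (v p.1) - X (v p.2)) ∣ P := by
  apply Finset.prod_dvd_of_isRelPrime
  · intro p hp q hq hpq
    rw [Finset.mem_coe, mem_ltPairs] at hp hq
    rw [Function.onFun, (prime_X_sub_X (hv.ne hp.ne)).irreducible.isRelPrime_iff_not_dvd]
    intro hdvd
    rcases eq_or_eq_of_X_sub_X_dvd (hv.ne hp.ne) (hv.ne hq.ne) hdvd with ⟨h1, h2⟩ | ⟨h1, h2⟩
    · exact hpq (Prod.ext (hv h1).symm (hv h2).symm)
    · rw [hv h1, hv h2] at hq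
      exact lt_asymm hp hq
  · intro p hp
    exact X_sub_X_dvd_of_rename_swap_eq_neg (h _ _ (mem_ltPairs.mp hp))

end MvPolynomial

section Shuffle

open Equiv

variable {k : ℕ}

theorem det_vandermonde_eq_prod_ltPairs {R : Type*} [CommRing R] (f : Fin k → R) :
    (Matrix.vandermonde f).det = ∏ p ∈ ltPairs (Fin k), (f p.2 - f p.1) := by
  rw [Matrix.det_vandermonde, ltPairs, Finset.prod_filter, Fintype.prod_prod_type]
  refine Finset.prod_congr rfl fun i _ => ?_
  rw [← Finset.prod_filter, Finset.filter_lt_eq_Ioi]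

theorem prod_ltPairs_sub_comp_perm {R : Type*} [CommRing R] (f : Fin k → R) (σ : Perm (Fin k)) :
    ∏ p ∈ ltPairs (Fin k), (f (σ p.1) - f (σ p.2)) =
      (Perm.sign σ : ℤ) * ∏ p ∈ ltPairs (Fin k), (f p.1 - f p.2) := by
  have hflip : ∀ g : Fin k → R, ∏ p ∈ ltPairs (Fin k), (g p.1 - g p.2) =
      (-1) ^ (ltPairs (Fin k)).card * (Matrix.vandermonde g).det := by
    intro g
    simp only [det_vandermonde_eq_prod_ltPairs, ← Finset.prod_neg, neg_sub]
  calc ∏ p ∈ ltPairs (Fin k), (f (σ p.1) - f (σ p.2))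
      = (-1) ^ (ltPairs (Fin k)).card * (Matrix.vandermonde (f ∘ σ)).det := hflip (f ∘ σ)
    _ = (-1) ^ (ltPairs (Fin k)).card * ((Perm.sign σ : ℤ) * (Matrix.vandermonde f).det) := by
      rw [← Matrix.det_permute]
      rfl
    _ = _ := by rw [hflip f]; ring

def omegaNumerator {R : Type*} [CommRing R] (q1 q2 x y : R) : R :=
  (x - q1 * q2 * y) * (y - q1 * x) * (y - q2 * x)

theorem omegaF_mul_sub {K : Type*} [Field K] (q1 q2 : K) {x y : K} (h : x ≠ y) :
    omegaF q1 q2 x y * (x - y) = omegaNumerator q1 q2 x y :=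
  div_mul_cancel₀ _ (sub_ne_zero.mpr h)

theorem Sh_eq_sum_ltPairs {K : Type*} [Field K] (q1 q2 : K) (z : Fin k → K) (d : Fin k → ℤ) :
    Sh q1 q2 z d = ∑ σ : Perm (Fin k), (∏ i, z (σ i) ^ d i) *
      ∏ p ∈ ltPairs (Fin k), omegaF q1 q2 (z (σ p.1)) (z (σ p.2)) :=
  rfl

theorem Sh_comp_perm {K : Type*} [Field K] (q1 q2 : K) (z : Fin k → K) (d : Fin k → ℤ)
    (τ : Perm (Fin k)) : Sh q1 q2 (z ∘ τ) d = Sh q1 q2 z d :=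
  Fintype.sum_equiv (Equiv.mulLeft τ) _ _ fun _ => rfl

theorem map_Sh {K L : Type*} [Field K] [Field L] (g : K →+* L) (q1 q2 : K) (z : Fin k → K)
    (d : Fin k → ℤ) : g (Sh q1 q2 z d) = Sh (g q1) (g q2) (g ∘ z) d := by
  simp [Sh, omegaF, map_sum, map_prod, map_zpow₀, map_div₀]

def shNumerator {R : Type*} [CommRing R] (q1 q2 : R) (z : Fin k → R) (e : Fin k → ℕ) : R :=
  ∑ σ : Perm (Fin k), (Perm.sign σ : ℤ) • ((∏ i, z (σ i) ^ e i) *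
    ∏ p ∈ ltPairs (Fin k), omegaNumerator q1 q2 (z (σ p.1)) (z (σ p.2)))

theorem map_shNumerator {R S : Type*} [CommRing R] [CommRing S] (g : R →+* S) (q1 q2 : R)
    (z : Fin k → R) (e : Fin k → ℕ) :
    g (shNumerator q1 q2 z e) = shNumerator (g q1) (g q2) (g ∘ z) e := by
  simp [shNumerator, omegaNumerator, map_sum, map_prod]

theorem shNumerator_comp_perm {R : Type*} [CommRing R] (q1 q2 : R) (z : Fin k → R)
    (e : Fin k → ℕ) (τ : Perm (Fin k)) :
    shNumerator q1 q2 (z ∘ τ) e = (Perm.sign τ : ℤ) • shNumerator q1 q2 z e := by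
  rw [shNumerator, shNumerator, Finset.smul_sum]
  refine Fintype.sum_equiv (Equiv.mulLeft τ) _ _ fun σ => ?_
  rw [smul_smul, Equiv.coe_mulLeft, Perm.sign_mul, Units.val_mul, ← mul_assoc,
    ← Units.val_mul, Int.units_mul_self, Units.val_one, one_mul]
  rfl

theorem Sh_mul_prod_pow_mul_prod_sub {K : Type*} [Field K] (q1 q2 : K) {z : Fin k → K}
    (hz0 : ∀ i, z i ≠ 0) (hz : Function.Injective z) {d : Fin k → ℤ} {m : ℕ} {e : Fin k → ℕ}
    (he : ∀ i, d i + m = e i) :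
    Sh q1 q2 z d * (∏ i, z i ^ m) * ∏ p ∈ ltPairs (Fin k), (z p.1 - z p.2) =
      shNumerator q1 q2 z e := by
  rw [Sh_eq_sum_ltPairs, Finset.sum_mul, Finset.sum_mul, shNumerator]
  refine Finset.sum_congr rfl fun σ _ => ?_
  set s : K := ((Perm.sign σ : ℤ) : K)
  have hs : s * s = 1 := by
    rw [← Int.cast_mul, ← Units.val_mul, Int.units_mul_self, Units.val_one, Int.cast_one]
  have hmono : (∏ i, z (σ i) ^ d i) * ∏ i, z i ^ m = ∏ i, z (σ i) ^ e i := by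
    rw [← Equiv.prod_comp σ (fun i => z i ^ m), ← Finset.prod_mul_distrib]
    refine Finset.prod_congr rfl fun i _ => ?_
    rw [← zpow_natCast, ← zpow_add₀ (hz0 _), he, zpow_natCast]
  have hnum : (∏ p ∈ ltPairs (Fin k), omegaF q1 q2 (z (σ p.1)) (z (σ p.2))) *
      (s * ∏ p ∈ ltPairs (Fin k), (z p.1 - z p.2)) =
      ∏ p ∈ ltPairs (Fin k), omegaNumerator q1 q2 (z (σ p.1)) (z (σ p.2)) := by
    rw [← prod_ltPairs_sub_comp_perm, ← Finset.prod_mul_distrib]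
    exact Finset.prod_congr rfl fun p hp =>
      omegaF_mul_sub q1 q2 (hz.ne (σ.injective.ne (mem_ltPairs.mp hp).ne))
  rw [zsmul_eq_mul, ← hmono, ← hnum]
  linear_combination (∏ i, z (σ i) ^ d i) * (∏ i, z i ^ m) *
    (∏ p ∈ ltPairs (Fin k), omegaF q1 q2 (z (σ p.1)) (z (σ p.2))) *
    (∏ p ∈ ltPairs (Fin k), (z p.1 - z p.2)) * (-hs)

end Shuffle

section FractionField

open Equiv

variable (k : ℕ)

theorem algebraMap_mem_laurentSubring (P : MvPolynomial (Fin 2 ⊕ Fin k) ℂ) :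
    algebraMap _ (Fk k) P ∈ laurentSubring (q1F k) (q2F k) (zF k) := by
  induction P using MvPolynomial.induction_on with
  | C c =>
    rw [← MvPolynomial.algebraMap_eq, ← IsScalarTower.algebraMap_apply]
    exact Subring.subset_closure (Or.inl (Or.inl (Or.inl ⟨c, rfl⟩)))
  | add p q hp hq => rw [map_add]; exact add_mem hp hq
  | mul_X p v hp =>
    rw [map_mul]
    refine mul_mem hp (Subring.subset_closure ?_)
    rcases v with j | i
    · fin_cases j <;> simp [q1F, q2F]
    · exact Or.inl (Or.inr ⟨i, rfl⟩)

theorem zF_ne_zero (i : Fin k) : zF k i ≠ 0 :=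
  (map_ne_zero_iff _ (IsFractionRing.injective _ (Fk k))).mpr (X_ne_zero _)

theorem zF_injective : Function.Injective (zF k) :=
  fun _ _ h => Sum.inr_injective (X_injective (IsFractionRing.injective _ (Fk k) h))

theorem permAut_algebraMap (τ : Perm (Fin k)) (P : MvPolynomial (Fin 2 ⊕ Fin k) ℂ) :
    permAut k τ (algebraMap _ (Fk k) P) =
      algebraMap _ (Fk k) (rename (sumCongr (Equiv.refl (Fin 2)) τ) P) :=
  IsFractionRing.ringEquivOfRingEquiv_algebraMap _ P

theorem permAut_Sh (τ : Perm (Fin k)) (d : Fin k → ℤ) :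
    permAut k τ (Sh (q1F k) (q2F k) (zF k) d) = Sh (q1F k) (q2F k) (zF k) d := by
  have hz : permAut k τ ∘ zF k = zF k ∘ τ := by
    ext i
    simp [zF, permAut_algebraMap]
  rw [← RingEquiv.coe_toRingHom, map_Sh, RingEquiv.coe_toRingHom, hz, Sh_comp_perm]
  simp [q1F, q2F, permAut_algebraMap]

theorem rename_swap_shNumerator {i j : Fin k} (hij : i ≠ j) (e : Fin k → ℕ) :
    rename (swap (Sum.inr i : Fin 2 ⊕ Fin k) (Sum.inr j))
        (shNumerator (X (Sum.inl 0)) (X (Sum.inl 1)) (X ∘ Sum.inr) e :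
          MvPolynomial (Fin 2 ⊕ Fin k) ℂ) =
      -shNumerator (X (Sum.inl 0)) (X (Sum.inl 1)) (X ∘ Sum.inr) e := by
  have hX : rename (R := ℂ) (swap (Sum.inr i : Fin 2 ⊕ Fin k) (Sum.inr j)) ∘ X ∘ Sum.inr =
      (X ∘ Sum.inr) ∘ swap i j := by
    ext1 l
    simp [← Perm.sumCongr_refl_swap]
  rw [← AlgHom.coe_toRingHom, map_shNumerator]
  simp only [AlgHom.coe_toRingHom, rename_X, swap_apply_of_ne_of_ne Sum.inl_ne_inr Sum.inl_ne_inr]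
  rw [hX, shNumerator_comp_perm, Perm.sign_swap hij]
  simp

theorem exists_Sh_mul_prod_pow_eq_algebraMap (d : Fin k → ℤ) :
    ∃ (m : ℕ) (M : MvPolynomial (Fin 2 ⊕ Fin k) ℂ),
      Sh (q1F k) (q2F k) (zF k) d * ∏ i, zF k i ^ m = algebraMap _ (Fk k) M := by
  obtain ⟨m, e, he⟩ : ∃ (m : ℕ) (e : Fin k → ℕ), ∀ i, d i + m = e i := by
    refine ⟨∑ i, (d i).natAbs, fun i => (d i + ∑ i, (d i).natAbs).toNat, fun i => ?_⟩
    have := Finset.single_le_sum (fun j _ => Nat.zero_le (d j).natAbs) (Finset.mem_univ i)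
    rw [Int.toNat_of_nonneg (by omega)]
  let N : MvPolynomial (Fin 2 ⊕ Fin k) ℂ :=
    shNumerator (X (Sum.inl 0)) (X (Sum.inl 1)) (X ∘ Sum.inr) e
  obtain ⟨M, hM⟩ := prod_ltPairs_X_sub_X_dvd (P := N) Sum.inr_injective
    fun i j hij => rename_swap_shNumerator k hij.ne e
  have hN : algebraMap _ (Fk k) N = shNumerator (q1F k) (q2F k) (zF k) e :=
    map_shNumerator _ _ _ _ _
  have hV : algebraMap _ (Fk k) (∏ p ∈ ltPairs (Fin k),
      (X (Sum.inr p.1) - X (Sum.inr p.2) : MvPolynomial (Fin 2 ⊕ Fin k) ℂ)) =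
      ∏ p ∈ ltPairs (Fin k), (zF k p.1 - zF k p.2) := by
    simp [zF]
  have hV0 : ∏ p ∈ ltPairs (Fin k), (zF k p.1 - zF k p.2) ≠ 0 :=
    Finset.prod_ne_zero_iff.mpr fun p hp =>
      sub_ne_zero.mpr ((zF_injective k).ne (mem_ltPairs.mp hp).ne)
  refine ⟨m, M, mul_right_cancel₀ hV0 ?_⟩
  rw [Sh_mul_prod_pow_mul_prod_sub _ _ (zF_ne_zero k) (zF_injective k) he, ← hN, hM, map_mul,
    hV, mul_comm]

theorem Sh_mem_laurentSubring (d : Fin k → ℤ) :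
    Sh (q1F k) (q2F k) (zF k) d ∈ laurentSubring (q1F k) (q2F k) (zF k) := by
  obtain ⟨m, M, hM⟩ := exists_Sh_mul_prod_pow_eq_algebraMap k d
  have hm : ∏ i, zF k i ^ m ≠ 0 :=
    Finset.prod_ne_zero_iff.mpr fun i _ => pow_ne_zero _ (zF_ne_zero k i)
  rw [(eq_mul_inv_iff_mul_eq₀ hm).mpr hM, ← Finset.prod_inv_distrib]
  refine mul_mem (algebraMap_mem_laurentSubring k M) (Subring.prod_mem _ fun i _ => ?_)
  have hinv : (zF k i)⁻¹ ∈ laurentSubring (q1F k) (q2F k) (zF k) :=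
    Subring.subset_closure (Or.inr ⟨i, rfl⟩)
  simpa only [inv_pow] using pow_mem hinv m

end FractionField

theorem sh_isLaurent_and_symmetric_general (k : ℕ) (d : Fin k → ℤ) :
    Sh (q1F k) (q2F k) (zF k) d ∈ laurentSubring (q1F k) (q2F k) (zF k) ∧
    ∀ τ : Equiv.Perm (Fin k),
      permAut k τ (Sh (q1F k) (q2F k) (zF k) d) = Sh (q1F k) (q2F k) (zF k) d :=
  ⟨Sh_mem_laurentSubring k d, fun τ => permAut_Sh k τ d⟩

/-- For every `k ≥ 1` and `d ∈ ℤ^k`, the monomial shuffle element `Sh_k(d)` is a Laurent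
polynomial (lies in `R[z1^{±1}, …, zk^{±1}]`), and it is symmetric: it is fixed by every
`ℂ(q1,q2)`-algebra automorphism of `F_k` permuting the variables `z_i ↦ z_{τ(i)}`. -/
theorem sh_isLaurent_and_symmetric (k : ℕ) (hk : 1 ≤ k) (d : Fin k → ℤ) :
    Sh (q1F k) (q2F k) (zF k) d ∈ laurentSubring (q1F k) (q2F k) (zF k) ∧
    ∀ τ : Equiv.Perm (Fin k),
      permAut k τ (Sh (q1F k) (q2F k) (zF k) d) = Sh (q1F k) (q2F k) (zF k) d :=
  sh_isLaurent_and_symmetric_general k d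

end
end

section
/- (Wheel conditions.) For every k ≥ 3 and every d = (d1, …, dk) ∈ ℤ^k, the monomial shuffle element Sh_k(d) vanishes under the wheel substitution: substituting z1 = q1·q2·t, z2 = q2·t, z3 = t (so that z1/z2 = q1, z2/z3 = q2, z3/z1 = 1/q) into Sh_k(d) yields 0 in the field ℂ(q1, q2, t, z4, …, zk). -/
open MvPolynomial Finset

noncomputable section

/-!
Each numerator factor of `ω` kills one of the ordered pairs `(z₂, z₁)`, `(z₃, z₂)`, `(z₁, z₃)` of
the wheel `z₁ = q₁q₂t, z₂ = q₂t, z₃ = t`. These three pairs form a cycle, so every ordering `σ`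
of the variables puts at least one of them in order, and then the corresponding factor
`ω(z_{σ(i)}, z_{σ(j)})` of the `σ`-summand vanishes.
-/

theorem lt_or_lt_or_lt_of_ne {α : Type*} [LinearOrder α] {a b c : α} (hab : a ≠ b)
    (hbc : b ≠ c) : b < a ∨ c < b ∨ a < c := by
  rcases hab.lt_or_gt with hab | hab
  · rcases hbc.lt_or_gt with hbc | hbc
    · exact .inr (.inr (hab.trans hbc))
    · exact .inr (.inl hbc)
  · exact .inl hab

section Wheel

variable {K : Type*} [Field K] (q1 q2 : K)

theorem omegaF_eq_zero_of_left_eq_q_mul {x y : K} (h : x = q1 * q2 * y) :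
    omegaF q1 q2 x y = 0 := by
  simp [omegaF, h]

theorem omegaF_eq_zero_of_right_eq_q1_mul {x y : K} (h : y = q1 * x) :
    omegaF q1 q2 x y = 0 := by
  simp [omegaF, h]

theorem omegaF_eq_zero_of_right_eq_q2_mul {x y : K} (h : y = q2 * x) :
    omegaF q1 q2 x y = 0 := by
  simp [omegaF, h]

theorem Sh_eq_zero_of_forall_exists_omegaF_eq_zero {k : ℕ} (z : Fin k → K) (d : Fin k → ℤ)
    (h : ∀ σ : Equiv.Perm (Fin k), ∃ i j, i < j ∧ omegaF q1 q2 (z (σ i)) (z (σ j)) = 0) :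
    Sh q1 q2 z d = 0 := by
  refine Finset.sum_eq_zero fun σ _ => mul_eq_zero_of_right _ ?_
  obtain ⟨i, j, hij, hω⟩ := h σ
  exact Finset.prod_eq_zero (i := (i, j)) (by simp [hij]) hω

theorem Sh_eq_zero_of_wheel {k : ℕ} (z : Fin k → K) (d : Fin k → ℤ) {a b c : Fin k}
    (hab : a ≠ b) (hbc : b ≠ c) (ha : z a = q1 * q2 * z c) (hb : z b = q2 * z c) :
    Sh q1 q2 z d = 0 := by
  refine Sh_eq_zero_of_forall_exists_omegaF_eq_zero q1 q2 z d fun σ => ?_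
  have hz (i : Fin k) : z (σ (σ⁻¹ i)) = z i := by simp
  rcases lt_or_lt_or_lt_of_ne (σ⁻¹.injective.ne hab) (σ⁻¹.injective.ne hbc) with
    hba | hcb | hac
  · refine ⟨_, _, hba, omegaF_eq_zero_of_right_eq_q1_mul q1 q2 ?_⟩
    rw [hz, hz, ha, hb, mul_assoc]
  · refine ⟨_, _, hcb, omegaF_eq_zero_of_right_eq_q2_mul q1 q2 ?_⟩
    rw [hz, hz, hb]
  · refine ⟨_, _, hac, omegaF_eq_zero_of_left_eq_q_mul q1 q2 ?_⟩
    rw [hz, hz, ha]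

end Wheel

/-- Wheel conditions: for every `k ≥ 3` (written `k = m + 3`) and `d ∈ ℤ^k`, substituting
`z1 = q1·q2·t, z2 = q2·t, z3 = t` (so `z1/z2 = q1`, `z2/z3 = q2`, `z3/z1 = 1/q`; here the fresh
variable `t` is realized as the variable `z3`, so the result lives in `ℂ(q1, q2, t, z4, …, zk)`)
into `Sh_k(d)` yields `0`. -/
theorem sh_wheel_conditions (m : ℕ) (d : Fin (m + 3) → ℤ) :
    Sh (q1F (m + 3)) (q2F (m + 3))
      (fun i => if i = 0 then q1F (m + 3) * q2F (m + 3) * zF (m + 3) 2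
                else if i = 1 then q2F (m + 3) * zF (m + 3) 2
                else zF (m + 3) i) d = 0 := by
  have h01 : (0 : Fin (m + 3)) ≠ 1 := by simp
  have h2 : 2 % (m + 3) = 2 := Nat.mod_eq_of_lt (by omega)
  have h12 : (1 : Fin (m + 3)) ≠ 2 := by simp [Fin.ext_iff, h2]
  have h02 : (0 : Fin (m + 3)) ≠ 2 := by simp [Fin.ext_iff, h2]
  exact Sh_eq_zero_of_wheel _ _ _ d h01 h12 (by simp [h02.symm, h12.symm])
    (by simp [h01.symm, h02.symm, h12.symm])

end
end

section
/- (A^R_2 as an ideal of V_2.) In the ring V_2 of symmetric Laurent polynomials in z1, z2 over R = ℂ[q1^{±1}, q2^{±1}] (the subring of R[z1^{±1}, z2^{±1}] consisting of elements invariant under exchanging z1 and z2), the ideal generated by Sh_2(0, 0) and Sh_2(1, 0) is equal to the ideal generated by g1 = 2q·z1² − (1 + q1 + q2 − 2q + q1·q + q2·q + q²)·z1·z2 + 2q·z2² and g2 = (1 − q1)(1 − q2)(1 − q)·(z1 + z2). -/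
open MvPolynomial Finset

noncomputable section

/-- Membership in `V_2`, the ring of symmetric Laurent polynomials in `z1, z2` over
`R = ℂ[q1^{±1}, q2^{±1}]`: a Laurent polynomial invariant under exchanging `z1` and `z2`. -/
def memV2 (x : Fk 2) : Prop :=
  x ∈ laurentSubring (q1F 2) (q2F 2) (zF 2) ∧ permAut 2 (Equiv.swap 0 1) x = x

/-! Both shuffle elements are symmetrizations of `ω`: `Sh_2(0,0) = ω(z1,z2) + ω(z2,z1) = g1` and
`Sh_2(1,0) = z1·ω(z1,z2) + z2·ω(z2,z1) = (z1 + z2)/2 · g1 + z1·z2/2 · g2`. As `(z1 + z2)/2` lies in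
`V_2` and `z1·z2/2` is a unit of `V_2`, the pairs `(g1, Sh_2(1,0))` and `(g1, g2)` generate the
same ideal. -/

namespace AR2

section Field

variable {K : Type*} [Field K]

def g₁ (q1 q2 x y : K) : K :=
  2 * (q1 * q2) * x ^ 2
    - (1 + q1 + q2 - 2 * (q1 * q2) + q1 * (q1 * q2) + q2 * (q1 * q2) + (q1 * q2) ^ 2) * (x * y)
    + 2 * (q1 * q2) * y ^ 2

def g₂ (q1 q2 x y : K) : K := (1 - q1) * (1 - q2) * (1 - q1 * q2) * (x + y)

theorem Sh_two (q1 q2 : K) (z : Fin 2 → K) (d : Fin 2 → ℤ) :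
    Sh q1 q2 z d = z 0 ^ d 0 * z 1 ^ d 1 * omegaF q1 q2 (z 0) (z 1)
      + z 1 ^ d 0 * z 0 ^ d 1 * omegaF q1 q2 (z 1) (z 0) := by
  have huniv : (univ : Finset (Equiv.Perm (Fin 2))) = {1, Equiv.swap 0 1} := by decide
  have hpairs : univ.filter (fun p : Fin 2 × Fin 2 => p.1 < p.2) = {(0, 1)} := by decide
  rw [Sh, huniv, hpairs, sum_pair (by decide)]
  simp [Fin.prod_univ_two]

variable (q1 q2 : K) {z : Fin 2 → K}

theorem Sh_two_zero_zero (hz : z 0 ≠ z 1) : Sh q1 q2 z ![0, 0] = g₁ q1 q2 (z 0) (z 1) := by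
  rw [Sh_two, omegaF, omegaF, g₁]
  simp only [Matrix.cons_val_zero, Matrix.cons_val_one, zpow_zero, one_mul]
  field_simp [sub_ne_zero.mpr hz, sub_ne_zero.mpr hz.symm]
  ring

theorem Sh_two_one_zero (hz : z 0 ≠ z 1) (h2 : (2 : K) ≠ 0) :
    Sh q1 q2 z ![1, 0] = (z 0 + z 1) * 2⁻¹ * g₁ q1 q2 (z 0) (z 1)
      + z 0 * z 1 * 2⁻¹ * g₂ q1 q2 (z 0) (z 1) := by
  rw [Sh_two, omegaF, omegaF, g₁, g₂]
  simp only [Matrix.cons_val_zero, Matrix.cons_val_one, zpow_zero, zpow_one, mul_one]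
  field_simp [sub_ne_zero.mpr hz, sub_ne_zero.mpr hz.symm]
  ring

end Field

theorem exists_mul_add_mul_iff {K : Type*} [CommRing K] (S : Subring K) {s g u v w : K}
    (hu : u ∈ S) (hv : v ∈ S) (hw : w ∈ S) (hvw : v * w = 1) (x : K) :
    (∃ a b, a ∈ S ∧ b ∈ S ∧ x = a * s + b * (u * s + v * g)) ↔
      ∃ a b, a ∈ S ∧ b ∈ S ∧ x = a * s + b * g := by
  constructor
  · rintro ⟨a, b, ha, hb, rfl⟩
    exact ⟨a + b * u, b * v, add_mem ha (mul_mem hb hu), mul_mem hb hv, by ring⟩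
  · rintro ⟨a, b, ha, hb, rfl⟩
    refine ⟨a - b * w * u, b * w, sub_mem ha (mul_mem (mul_mem hb hw) hu), mul_mem hb hw, ?_⟩
    linear_combination -(b * g) * hvw

section Laurent

variable {K : Type*} [Field K] [Algebra ℂ K] (q1 q2 : K) {k : ℕ} (z : Fin k → K)

theorem algebraMap_mem_laurentSubring (c : ℂ) : algebraMap ℂ K c ∈ laurentSubring q1 q2 z :=
  Subring.subset_closure (Or.inl (Or.inl (Or.inl ⟨c, rfl⟩)))

theorem mem_laurentSubring (i : Fin k) : z i ∈ laurentSubring q1 q2 z :=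
  Subring.subset_closure (Or.inl (Or.inr ⟨i, rfl⟩))

theorem inv_mem_laurentSubring (i : Fin k) : (z i)⁻¹ ∈ laurentSubring q1 q2 z :=
  Subring.subset_closure (Or.inr ⟨i, rfl⟩)

end Laurent

section Indeterminates

variable {k : ℕ}

theorem zF_injective : Function.Injective (zF k) := fun _ _ h =>
  Sum.inr_injective (X_injective (IsFractionRing.injective _ (Fk k) h))

theorem zF_ne_zero (i : Fin k) : zF k i ≠ 0 :=
  (map_ne_zero_iff _ (IsFractionRing.injective _ (Fk k))).mpr (X_ne_zero _)

theorem permAut_zF (τ : Equiv.Perm (Fin k)) (i : Fin k) : permAut k τ (zF k i) = zF k (τ i) := by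
  rw [zF, permAut, IsFractionRing.ringEquivOfRingEquiv_algebraMap]
  simp [zF]

theorem permAut_algebraMap (τ : Equiv.Perm (Fin k)) (c : ℂ) :
    permAut k τ (algebraMap ℂ (Fk k) c) = algebraMap ℂ (Fk k) c := by
  rw [IsScalarTower.algebraMap_apply ℂ (MvPolynomial (Fin 2 ⊕ Fin k) ℂ) (Fk k), permAut,
    IsFractionRing.ringEquivOfRingEquiv_algebraMap]
  simp [MvPolynomial.algebraMap_eq]

end Indeterminates

def V2 : Subring (Fk 2) :=
  laurentSubring (q1F 2) (q2F 2) (zF 2) ⊓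
    (permAut 2 (Equiv.swap 0 1)).toRingHom.eqLocus (RingHom.id _)

theorem mem_V2 {x : Fk 2} : x ∈ V2 ↔ memV2 x := Iff.rfl

theorem permAut_swap_zF_zero : permAut 2 (Equiv.swap 0 1) (zF 2 0) = zF 2 1 := by
  rw [permAut_zF, Equiv.swap_apply_left]

theorem permAut_swap_zF_one : permAut 2 (Equiv.swap 0 1) (zF 2 1) = zF 2 0 := by
  rw [permAut_zF, Equiv.swap_apply_right]

theorem algebraMap_mem_V2 (c : ℂ) : algebraMap ℂ (Fk 2) c ∈ V2 :=
  mem_V2.mpr ⟨algebraMap_mem_laurentSubring _ _ _ c, permAut_algebraMap _ c⟩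

theorem zF_add_zF_mem_V2 : zF 2 0 + zF 2 1 ∈ V2 := by
  refine mem_V2.mpr ⟨add_mem (mem_laurentSubring _ _ _ 0) (mem_laurentSubring _ _ _ 1), ?_⟩
  rw [map_add, permAut_swap_zF_zero, permAut_swap_zF_one, add_comm]

theorem zF_mul_zF_mem_V2 : zF 2 0 * zF 2 1 ∈ V2 := by
  refine mem_V2.mpr ⟨mul_mem (mem_laurentSubring _ _ _ 0) (mem_laurentSubring _ _ _ 1), ?_⟩
  rw [map_mul, permAut_swap_zF_zero, permAut_swap_zF_one, mul_comm]

theorem inv_zF_mul_zF_mem_V2 : (zF 2 0 * zF 2 1)⁻¹ ∈ V2 := by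
  refine mem_V2.mpr ⟨?_, by rw [map_inv₀, (mem_V2.mp zF_mul_zF_mem_V2).2]⟩
  rw [mul_inv]
  exact mul_mem (inv_mem_laurentSubring _ _ _ 0) (inv_mem_laurentSubring _ _ _ 1)

end AR2

open AR2

/-- `A^R_2` as an ideal of `V_2`: in `V_2`, the ideal generated by `Sh_2(0,0)` and `Sh_2(1,0)`
equals the ideal generated by `g1 = 2q·z1² − (1 + q1 + q2 − 2q + q1·q + q2·q + q²)·z1·z2 + 2q·z2²`
and `g2 = (1 − q1)(1 − q2)(1 − q)·(z1 + z2)`. -/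
theorem AR2_ideal_eq :
    ∀ x : Fk 2,
      (∃ a b : Fk 2, memV2 a ∧ memV2 b ∧
        x = a * Sh (q1F 2) (q2F 2) (zF 2) ![0, 0] + b * Sh (q1F 2) (q2F 2) (zF 2) ![1, 0]) ↔
      (∃ a b : Fk 2, memV2 a ∧ memV2 b ∧
        x = a * (2 * (q1F 2 * q2F 2) * zF 2 0 ^ 2
              - (1 + q1F 2 + q2F 2 - 2 * (q1F 2 * q2F 2) + q1F 2 * (q1F 2 * q2F 2)
                  + q2F 2 * (q1F 2 * q2F 2) + (q1F 2 * q2F 2) ^ 2) * (zF 2 0 * zF 2 1)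
              + 2 * (q1F 2 * q2F 2) * zF 2 1 ^ 2)
          + b * ((1 - q1F 2) * (1 - q2F 2) * (1 - q1F 2 * q2F 2) * (zF 2 0 + zF 2 1))) := by
  intro x
  have hz : zF 2 0 ≠ zF 2 1 := zF_injective.ne (by decide)
  have h2 : (2 : Fk 2) ≠ 0 := two_ne_zero
  have hprod : zF 2 0 * zF 2 1 ≠ 0 := mul_ne_zero (zF_ne_zero 0) (zF_ne_zero 1)
  have half_mem : (2 : Fk 2)⁻¹ ∈ V2 := by simpa [map_ofNat] using algebraMap_mem_V2 2⁻¹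
  rw [Sh_two_zero_zero _ _ hz, Sh_two_one_zero _ _ hz h2]
  -- the goal is the instance below up to unfolding `g₁`, `g₂` and `x ∈ V2 ↔ memV2 x`
  exact exists_mul_add_mul_iff V2 (mul_mem zF_add_zF_mem_V2 half_mem)
    (mul_mem zF_mul_zF_mem_V2 half_mem) (mul_mem (ofNat_mem V2 2) inv_zF_mul_zF_mem_V2)
    (by rw [mul_assoc, inv_mul_cancel_left₀ h2, mul_inv_cancel₀ hprod]) x

end
end
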